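/- arXiv:1903.05350 — 2 statements merged into one kernel-verified Lean document; each statement's English description precedes it below -/
import Mathlib

section
/- Let p be a prime, n a positive integer, and 1 ≤ m ≤ n. For a function f : 𝔽_p^n → 𝔽_p, the cyclotomic polynomial Φ_{p^m}(z) divides the associated polynomial F(z) in ℂ[z] if and only if for every t ∈ 𝔽_p and all a_1,...,a_m ∈ 𝔽_p, p · #{x ∈ 𝔽_p^n : f(x) = t and x_i = a_i for 1 ≤ i ≤ m} = #{x ∈ 𝔽_p^n : f(x) = t and x_i = a_i for 1 ≤ i ≤ m−1} (equivalently, the conditional distribution of f(X) given X_1,...,X_{m−1},X_m equals that given X_1,...,X_{m−1} for uniformly distributed X). -/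
/-- `ω = exp(2π√-1/p)`, a primitive `p`-th root of unity in `ℂ`. -/
noncomputable def omegaC (p : ℕ) : ℂ := Complex.exp (2 * Real.pi * Complex.I / p)

/-- `ξ = exp(2π√-1/pⁿ)`, a primitive `pⁿ`-th root of unity in `ℂ`. -/
noncomputable def xiC (p n : ℕ) : ℂ := Complex.exp (2 * Real.pi * Complex.I / (p ^ n : ℕ))

/-- The integer `k = Σ_{i=1}^n x_i p^{i-1}` whose `p`-adic digits are `x₁,…,xₙ`
(0-indexed here). -/
def idx {p n : ℕ} (x : Fin n → ZMod p) : ℕ := ∑ i : Fin n, (x i).val * p ^ (i : ℕ)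

/-- The associated polynomial `F(z) = Σ_{k=0}^{pⁿ-1} ω^{f(k)} z^k
  = Σ_{x ∈ 𝔽ₚⁿ} ω^{f(x)} z^{idx x} ∈ ℂ[z]`. -/
noncomputable def assocPoly {p n : ℕ} [NeZero p] (f : (Fin n → ZMod p) → ZMod p) :
    Polynomial ℂ :=
  ∑ x : Fin n → ZMod p, Polynomial.monomial (idx x) (omegaC p ^ (f x).val)

/-- Discrete Fourier transform over ℂ: `𝔉_f(j) = Σ_{k=0}^{pⁿ-1} ω^{f(k)} ξ^{-kj}`. -/
noncomputable def dft {p n : ℕ} [NeZero p] (f : (Fin n → ZMod p) → ZMod p) (j : ℕ) : ℂ :=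
  ∑ x : Fin n → ZMod p, omegaC p ^ (f x).val * xiC p n ^ (-((idx x * j : ℕ) : ℤ))

/-- `f` is `m`-th order correlation-immune: for every `m`-subset `S` of the variable
indices, every assignment `a` of values on `S` and every `t`,
`p^m ⬝ #{x : f x = t ∧ x∣_S = a∣_S} = #{x : f x = t}`. -/
def CorrImmune {p n : ℕ} [NeZero p] (f : (Fin n → ZMod p) → ZMod p) (m : ℕ) : Prop :=
  ∀ S : Finset (Fin n), S.card = m → ∀ a : Fin n → ZMod p, ∀ t : ZMod p,
    p ^ m * (Finset.univ.filter fun x : Fin n → ZMod p =>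
        f x = t ∧ ∀ i ∈ S, x i = a i).card
      = (Finset.univ.filter fun x : Fin n → ZMod p => f x = t).card

/-- `f` is balanced: every output value is attained exactly `p^{n-1}` times. -/
def IsBalanced {p n : ℕ} [NeZero p] (f : (Fin n → ZMod p) → ZMod p) : Prop :=
  ∀ t : ZMod p,
    (Finset.univ.filter fun x : Fin n → ZMod p => f x = t).card = p ^ (n - 1)

/-- `f` is `m`-resilient: `m`-th order correlation-immune and balanced. -/
def Resilient {p n : ℕ} [NeZero p] (f : (Fin n → ZMod p) → ZMod p) (m : ℕ) : Prop :=
  CorrImmune f m ∧ IsBalanced f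

open Polynomial Finset

section Aux
variable {p : ℕ} [hp : Fact p.Prime]

lemma omega_prim : IsPrimitiveRoot (omegaC p) p := by
  simpa [omegaC] using Complex.isPrimitiveRoot_exp p hp.out.ne_zero

lemma idx_succ {m : ℕ} (x : Fin (m + 1) → ZMod p) :
    idx x = idx (Fin.init x) + (x (Fin.last m)).val * p ^ m := by
  simp [idx, Fin.sum_univ_castSucc, Fin.init]

lemma idx_snoc {m : ℕ} (a : Fin m → ZMod p) (b : ZMod p) :
    idx (Fin.snoc a b) = idx a + b.val * p ^ m := by
  rw [idx_succ]; simp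

lemma idx_lt {m : ℕ} (a : Fin m → ZMod p) : idx a < p ^ m := by
  induction m with
  | zero => simp [idx]
  | succ m ih =>
    have h1 : idx (Fin.init a) < p ^ m := ih _
    have h2 : (a (Fin.last m)).val < p := ZMod.val_lt _
    have h3 : (a (Fin.last m)).val * p ^ m ≤ (p - 1) * p ^ m :=
      Nat.mul_le_mul_right _ (by omega)
    have h4 : (p - 1) * p ^ m + p ^ m = p ^ (m + 1) := by
      have h5 : p - 1 + 1 = p := Nat.succ_pred_eq_of_pos hp.out.pos
      calc (p - 1) * p ^ m + p ^ m = (p - 1 + 1) * p ^ m := by ring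
        _ = p ^ (m + 1) := by rw [h5, pow_succ]; ring
    rw [idx_succ]
    omega

lemma idx_inj {m : ℕ} : Function.Injective (idx (p := p) (n := m)) := by
  induction m with
  | zero => intro a b _; funext i; exact i.elim0
  | succ m ih =>
    intro a b h
    rw [idx_succ a, idx_succ b] at h
    have hA := idx_lt (Fin.init a)
    have hB := idx_lt (Fin.init b)
    have hmod : idx (Fin.init a) = idx (Fin.init b) := by
      have := congrArg (· % p ^ m) h
      simpa [Nat.add_mul_mod_self_right, Nat.mod_eq_of_lt hA, Nat.mod_eq_of_lt hB] using this
    have hv : (a (Fin.last m)).val * p ^ m = (b (Fin.last m)).val * p ^ m := by omega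
    have hval : a (Fin.last m) = b (Fin.last m) := by
      have := Nat.eq_of_mul_eq_mul_right (pow_pos hp.out.pos m) hv
      exact ZMod.val_injective p this
    have hinit := ih hmod
    funext i
    refine Fin.lastCases ?_ ?_ i
    · exact hval
    · intro j
      have := congrFun hinit j
      simpa [Fin.init] using this

lemma idx_mod {n m : ℕ} (hmn : m ≤ n) (x : Fin n → ZMod p) :
    idx x % p ^ m = idx (fun i : Fin m => x (Fin.castLE hmn i)) := by
  classical
  set g : ℕ → ℕ := fun k => if h : k < n then (x ⟨k, h⟩).val * p ^ k else 0 with hgdef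
  have h1 : idx x = ∑ k ∈ Finset.range n, g k := by
    rw [← Fin.sum_univ_eq_sum_range]
    refine Finset.sum_congr rfl fun i _ => ?_
    simp [idx, hgdef, i.isLt]
  have h2 : idx (fun i : Fin m => x (Fin.castLE hmn i)) = ∑ k ∈ Finset.range m, g k := by
    rw [← Fin.sum_univ_eq_sum_range]
    refine Finset.sum_congr rfl fun i _ => ?_
    have hi : (i : ℕ) < n := lt_of_lt_of_le i.isLt hmn
    simp [idx, hgdef, hi, Fin.castLE]
  have h3 : ∑ k ∈ Finset.range m, g k + ∑ k ∈ Finset.Ico m n, g k = ∑ k ∈ Finset.range n, g k :=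
    Finset.sum_range_add_sum_Ico _ hmn
  have h4 : p ^ m ∣ ∑ k ∈ Finset.Ico m n, g k := by
    refine Finset.dvd_sum fun k hk => ?_
    have hmk : m ≤ k := (Finset.mem_Ico.mp hk).1
    rcases lt_or_ge k n with hkn | hkn
    · simp only [hgdef, dif_pos hkn]
      exact Dvd.dvd.mul_left (pow_dvd_pow p hmk) _
    · simp [hgdef, Nat.not_lt.mpr hkn]
  obtain ⟨c, hc⟩ := h4
  have : idx x = idx (fun i : Fin m => x (Fin.castLE hmn i)) + p ^ m * c := by omega
  rw [this, Nat.add_mul_mod_self_left, Nat.mod_eq_of_lt (idx_lt _)]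

lemma lin_indep (c : ZMod p → ℤ)
    (h0 : ∑ t : ZMod p, (c t : ℂ) * omegaC p ^ t.val = 0)
    (h1 : ∑ t : ZMod p, c t = 0) : ∀ t, c t = 0 := by
  classical
  set P : Polynomial ℚ := ∑ t : ZMod p, C ((c t : ℚ)) * X ^ t.val with hP
  have hcoeff : ∀ t : ZMod p, P.coeff t.val = (c t : ℚ) := by
    intro t
    rw [hP, finset_sum_coeff, Finset.sum_eq_single t]
    · simp
    · intro s _ hst
      rw [coeff_C_mul, coeff_X_pow, if_neg, mul_zero]
      exact fun h => hst (ZMod.val_injective p h.symm)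
    · simp
  have haev : Polynomial.aeval (omegaC p) P = 0 := by
    rw [hP, map_sum]
    rw [← h0]
    refine Finset.sum_congr rfl fun t _ => ?_
    simp [Complex.coe_algebraMap]
  have hdvd : cyclotomic p ℚ ∣ P := by
    rw [cyclotomic_eq_minpoly_rat omega_prim hp.out.pos]
    exact minpoly.dvd ℚ _ haev
  obtain ⟨Q, hQ⟩ := hdvd
  by_cases hQ0 : Q = 0
  · intro t
    have hP0 : P = 0 := by rw [hQ, hQ0, mul_zero]
    have h := hcoeff t
    rw [hP0, coeff_zero] at h
    exact_mod_cast h.symm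
  · have hdegP : P.natDegree ≤ p - 1 := by
      refine Polynomial.natDegree_sum_le_of_forall_le _ _ fun t _ => ?_
      refine le_trans (natDegree_C_mul_le _ _) ?_
      simp only [natDegree_X_pow]
      have := ZMod.val_lt t
      omega
    have hcyc0 : cyclotomic p ℚ ≠ 0 := cyclotomic_ne_zero p ℚ
    have hdeg : P.natDegree = (p - 1) + Q.natDegree := by
      rw [hQ, natDegree_mul hcyc0 hQ0, natDegree_cyclotomic, Nat.totient_prime hp.out]
    have hQdeg : Q.natDegree = 0 := by omega
    obtain ⟨q, hq⟩ := natDegree_eq_zero.mp hQdeg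
    have hqc : ∀ t : ZMod p, (c t : ℚ) = q := by
      intro t
      rw [← hcoeff t, hQ, ← hq, cyclotomic_prime ℚ p]
      rw [Finset.sum_mul, finset_sum_coeff]
      rw [Finset.sum_eq_single t.val]
      · simp
      · intro s hs hst
        rw [mul_comm, coeff_C_mul, coeff_X_pow, if_neg (fun h => hst h.symm), mul_zero]
      · intro h; exact absurd (Finset.mem_range.mpr (ZMod.val_lt t)) h
    have hsum : (p : ℚ) * q = 0 := by
      have : ∑ t : ZMod p, (c t : ℚ) = 0 := by exact_mod_cast congrArg (Int.cast : ℤ → ℚ) h1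
      rw [Finset.sum_congr rfl (fun t _ => hqc t)] at this
      simpa [Finset.card_univ, ZMod.card, mul_comm] using this
    have hq0 : q = 0 := by
      have : (p : ℚ) ≠ 0 := Nat.cast_ne_zero.mpr hp.out.ne_zero
      rcases mul_eq_zero.mp hsum with h | h
      · exact absurd h this
      · exact h
    intro t
    have := hqc t
    rw [hq0] at this
    exact_mod_cast this
end Aux

section Aux2
variable {p : ℕ} [hp : Fact p.Prime]

lemma dvd_G_iff {m' : ℕ} (g : (Fin (m' + 1) → ZMod p) → ℂ) :
    cyclotomic (p ^ (m' + 1)) ℂ ∣ (∑ a : Fin (m' + 1) → ZMod p, (monomial (idx a)) (g a)) ↔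
    ∀ (a' : Fin m' → ZMod p) (b : ZMod p), g (Fin.snoc a' b) = g (Fin.snoc a' 0) := by
  classical
  set M := p ^ m' with hM
  have hMpos : 0 < M := pow_pos hp.out.pos _
  set G := ∑ a : Fin (m' + 1) → ZMod p, (monomial (idx a)) (g a) with hG
  have hGcoeff : ∀ a, G.coeff (idx a) = g a := by
    intro a
    rw [hG, finset_sum_coeff, Finset.sum_eq_single a]
    · simp
    · intro b _ hb
      rw [coeff_monomial, if_neg (fun h => hb (idx_inj h))]
    · simp
  constructor
  · rintro ⟨Q, hQ⟩
    by_cases hQ0 : Q = 0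
    · intro a' b
      have hG0 : G = 0 := by rw [hQ, hQ0, mul_zero]
      have h0 : ∀ a, g a = 0 := fun a => by rw [← hGcoeff a, hG0, coeff_zero]
      rw [h0, h0]
    · have hdeg : G.natDegree ≤ p ^ (m' + 1) - 1 := by
        refine Polynomial.natDegree_sum_le_of_forall_le _ _ fun a _ => ?_
        refine le_trans (natDegree_monomial_le _) ?_
        have := idx_lt a
        omega
      have hdQ : Q.natDegree < M := by
        have hΦ : (cyclotomic (p ^ (m' + 1)) ℂ) ≠ 0 := cyclotomic_ne_zero _ ℂ
        have hmul := natDegree_mul hΦ hQ0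
        rw [← hQ, natDegree_cyclotomic, Nat.totient_prime_pow hp.out (Nat.succ_pos m')] at hmul
        have hpm : p ^ (m' + 1) = M * p := by rw [pow_succ, hM]
        have hp2 : 2 ≤ p := hp.out.two_le
        have hMp : M * p = M * (p - 1) + M := by
          have : p = (p - 1) + 1 := by omega
          calc M * p = M * ((p - 1) + 1) := by rw [← this]
            _ = M * (p - 1) + M := by ring
        have hc : p ^ (m'.succ - 1) * (p - 1) = M * (p - 1) := by rw [Nat.succ_sub_one, hM]
        omega
      have key : ∀ r j, r < M → j < p → G.coeff (r + j * M) = Q.coeff r := by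
        intro r j hr hj
        have hGsum : G = ∑ i ∈ Finset.range p, Q * X ^ (M * i) := by
          rw [hQ, cyclotomic_prime_pow_eq_geom_sum hp.out, Finset.sum_mul]
          refine Finset.sum_congr rfl fun i _ => ?_
          rw [← pow_mul, mul_comm]
        rw [hGsum, finset_sum_coeff, Finset.sum_eq_single j]
        · rw [coeff_mul_X_pow']
          have h2 : j * M = M * j := Nat.mul_comm _ _
          rw [if_pos (by omega)]
          congr 1
          omega
        · intro i _ hij
          rw [coeff_mul_X_pow']
          split_ifs with hle
          · apply coeff_eq_zero_of_natDegree_lt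
            have h2 : j * M = M * j := Nat.mul_comm _ _
            rcases lt_or_gt_of_ne hij with h | h
            · have h4 : M * (i + 1) ≤ M * j := Nat.mul_le_mul_left M h
              have h3 : M * (i + 1) = M * i + M := by ring
              omega
            · have h4 : M * (j + 1) ≤ M * i := Nat.mul_le_mul_left M h
              have h3 : M * (j + 1) = M * j + M := by ring
              omega
          · rfl
        · intro h; exact absurd (Finset.mem_range.mpr hj) h
      intro a' b
      have h1 := key (idx a') b.val (idx_lt a') (ZMod.val_lt b)
      have h2 := key (idx a') 0 (idx_lt a') hp.out.pos
      rw [← hGcoeff (Fin.snoc a' b), ← hGcoeff (Fin.snoc a' 0), idx_snoc, idx_snoc]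
      simp only [ZMod.val_zero, zero_mul, add_zero] at *
      rw [h1, h2]
  · intro hC
    refine ⟨∑ a' : Fin m' → ZMod p, (monomial (idx a')) (g (Fin.snoc a' 0)), ?_⟩
    rw [cyclotomic_prime_pow_eq_geom_sum hp.out, Finset.sum_mul]
    have hRHS : ∀ i : ℕ, (X ^ p ^ m' : Polynomial ℂ) ^ i *
        (∑ a' : Fin m' → ZMod p, (monomial (idx a')) (g (Fin.snoc a' 0)))
        = ∑ a' : Fin m' → ZMod p, (monomial (M * i + idx a')) (g (Fin.snoc a' 0)) := by
      intro i
      rw [Finset.mul_sum]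
      refine Finset.sum_congr rfl fun a' _ => ?_
      rw [← pow_mul, X_pow_eq_monomial, monomial_mul_monomial, one_mul]
    have hLHS : G = ∑ b : ZMod p, ∑ a' : Fin m' → ZMod p,
        (monomial (idx a' + b.val * M)) (g (Fin.snoc a' 0)) := by
      rw [hG, ← (Fin.snocEquiv (fun _ => ZMod p)).sum_comp
        (fun a => (monomial (idx a)) (g a)), Fintype.sum_prod_type]
      refine Finset.sum_congr rfl fun b _ => Finset.sum_congr rfl fun a' _ => ?_
      show (monomial (idx (Fin.snoc a' b))) (g (Fin.snoc a' b)) = _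
      rw [idx_snoc, hC a' b]
    rw [hLHS]
    rw [Finset.sum_congr rfl (fun i _ => hRHS i)]
    refine Finset.sum_nbij' (fun b => b.val) (fun i => (i : ZMod p)) ?_ ?_ ?_ ?_ ?_
    · intro b _; exact Finset.mem_range.mpr (ZMod.val_lt b)
    · intro i _; exact Finset.mem_univ _
    · intro b _; exact ZMod.natCast_rightInverse b
    · intro i hi; exact ZMod.val_cast_of_lt (Finset.mem_range.mp hi)
    · intro b _
      refine Finset.sum_congr rfl fun a' _ => ?_
      congr 1
      rw [add_comm, mul_comm]

end Aux2

section Aux3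
variable {p : ℕ} [hp : Fact p.Prime]

lemma dvd_F_iff_dvd_G {n m : ℕ} (hmn : m ≤ n) (f : (Fin n → ZMod p) → ZMod p) :
    cyclotomic (p ^ m) ℂ ∣ (∑ x : Fin n → ZMod p, (monomial (idx x)) (omegaC p ^ (f x).val)) ↔
    cyclotomic (p ^ m) ℂ ∣ ∑ a : Fin m → ZMod p, (monomial (idx a))
      (∑ x ∈ Finset.univ.filter (fun x : Fin n → ZMod p =>
          (fun i : Fin m => x (Fin.castLE hmn i)) = a), omegaC p ^ (f x).val) := by
  classical
  set F := ∑ x : Fin n → ZMod p, (monomial (idx x)) (omegaC p ^ (f x).val) with hF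
  set H := ∑ x : Fin n → ZMod p, (monomial (idx x % p ^ m)) (omegaC p ^ (f x).val) with hH
  have hdiff : cyclotomic (p ^ m) ℂ ∣ F - H := by
    rw [hF, hH, ← Finset.sum_sub_distrib]
    refine Finset.dvd_sum fun x _ => ?_
    have hdecomp : idx x = idx x % p ^ m + p ^ m * (idx x / p ^ m) := (Nat.mod_add_div _ _).symm
    have hx : (monomial (idx x)) (omegaC p ^ (f x).val)
        - (monomial (idx x % p ^ m)) (omegaC p ^ (f x).val)
        = C (omegaC p ^ (f x).val) *
          (X ^ (idx x % p ^ m) * (((X : Polynomial ℂ) ^ p ^ m) ^ (idx x / p ^ m) - 1)) := by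
      conv_rhs => rw [← pow_mul, mul_sub, mul_one, mul_sub, ← pow_add, ← hdecomp]
      rw [C_mul_X_pow_eq_monomial, C_mul_X_pow_eq_monomial]
    rw [hx]
    refine Dvd.dvd.mul_left (Dvd.dvd.mul_left ?_ _) _
    have h1 : (X : Polynomial ℂ) ^ p ^ m - 1 ∣ ((X : Polynomial ℂ) ^ p ^ m) ^ (idx x / p ^ m) - 1 := by
      simpa using sub_dvd_pow_sub_pow ((X : Polynomial ℂ) ^ p ^ m) 1 (idx x / p ^ m)
    exact (cyclotomic.dvd_X_pow_sub_one (p ^ m) ℂ).trans h1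
  have hHG : H = ∑ a : Fin m → ZMod p, (monomial (idx a))
      (∑ x ∈ Finset.univ.filter (fun x : Fin n → ZMod p =>
          (fun i : Fin m => x (Fin.castLE hmn i)) = a), omegaC p ^ (f x).val) := by
    rw [hH]
    rw [Finset.sum_congr rfl (fun x (_ : x ∈ Finset.univ) => by rw [idx_mod hmn x])]
    rw [← Finset.sum_fiberwise Finset.univ (fun x : Fin n → ZMod p => fun i : Fin m => x (Fin.castLE hmn i))
      (fun x => (monomial (idx (fun i : Fin m => x (Fin.castLE hmn i)))) (omegaC p ^ (f x).val))]
    refine Finset.sum_congr rfl fun a _ => ?_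
    rw [Finset.sum_congr rfl (fun x hx => by rw [(Finset.mem_filter.mp hx).2] :
      ∀ x ∈ Finset.univ.filter (fun x : Fin n → ZMod p =>
          (fun i : Fin m => x (Fin.castLE hmn i)) = a),
        (monomial (idx (fun i : Fin m => x (Fin.castLE hmn i)))) (omegaC p ^ (f x).val)
          = (monomial (idx a)) (omegaC p ^ (f x).val))]
    exact (map_sum (monomial (idx a)) _ _).symm
  constructor
  · intro h
    have h2 : cyclotomic (p ^ m) ℂ ∣ H := by
      have he : H = F - (F - H) := by ring
      rw [he]; exact dvd_sub h hdiff
    rwa [hHG] at h2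
  · intro h
    have h2 : cyclotomic (p ^ m) ℂ ∣ H := by rwa [← hHG] at h
    have he : F = H + (F - H) := by ring
    rw [he]
    exact dvd_add h2 hdiff

lemma snoc_lt_apply {m' : ℕ} {α : Type*} (a' : Fin m' → α) (b : α) (i : Fin (m' + 1))
    (h : (i : ℕ) < m') : Fin.snoc (α := fun _ => α) a' b i = a' ⟨i, h⟩ := by
  simp [Fin.snoc, h, Fin.castLT]

end Aux3

section Aux4

def Ncount (p n m : ℕ) [NeZero p] (hmn : m ≤ n) (f : (Fin n → ZMod p) → ZMod p)
    (t : ZMod p) (a : Fin m → ZMod p) : ℕ :=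
  (Finset.univ.filter fun x : Fin n → ZMod p =>
    f x = t ∧ (fun i : Fin m => x (Fin.castLE hmn i)) = a).card

noncomputable def gsum (p n m : ℕ) [NeZero p] (hmn : m ≤ n) (f : (Fin n → ZMod p) → ZMod p)
    (a : Fin m → ZMod p) : ℂ :=
  ∑ x ∈ Finset.univ.filter (fun x : Fin n → ZMod p =>
    (fun i : Fin m => x (Fin.castLE hmn i)) = a), omegaC p ^ (f x).val

variable {p : ℕ} [hp : Fact p.Prime]

lemma gsum_eq (n m : ℕ) (hmn : m ≤ n) (f : (Fin n → ZMod p) → ZMod p) (a : Fin m → ZMod p) :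
    gsum p n m hmn f a = ∑ t : ZMod p, (Ncount p n m hmn f t a : ℂ) * omegaC p ^ t.val := by
  classical
  rw [gsum]
  rw [← Finset.sum_fiberwise (Finset.univ.filter (fun x : Fin n → ZMod p =>
    (fun i : Fin m => x (Fin.castLE hmn i)) = a)) f (fun x => omegaC p ^ (f x).val)]
  refine Finset.sum_congr rfl fun t _ => ?_
  have hset : (Finset.univ.filter (fun x : Fin n → ZMod p =>
      (fun i : Fin m => x (Fin.castLE hmn i)) = a)).filter (fun x => f x = t)
      = Finset.univ.filter (fun x : Fin n → ZMod p =>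
        f x = t ∧ (fun i : Fin m => x (Fin.castLE hmn i)) = a) := by
    rw [Finset.filter_filter]
    apply Finset.filter_congr
    intro x _
    simp [and_comm]
  have h1 : ∀ x ∈ (Finset.univ.filter (fun x : Fin n → ZMod p =>
      (fun i : Fin m => x (Fin.castLE hmn i)) = a)).filter (fun x => f x = t),
      omegaC p ^ (f x).val = omegaC p ^ t.val := fun x hx => by
    rw [(Finset.mem_filter.mp hx).2]
  rw [Finset.sum_congr rfl h1, Finset.sum_const, hset, nsmul_eq_mul, Ncount]

lemma Ncount_sum (n m : ℕ) (hmn : m ≤ n) (f : (Fin n → ZMod p) → ZMod p) (a : Fin m → ZMod p) :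
    ∑ t : ZMod p, Ncount p n m hmn f t a =
      (Finset.univ.filter fun x : Fin n → ZMod p =>
        (fun i : Fin m => x (Fin.castLE hmn i)) = a).card := by
  classical
  rw [Finset.card_eq_sum_card_fiberwise (f := f) (t := Finset.univ) (fun _ _ => Finset.mem_univ _)]
  refine Finset.sum_congr rfl fun t _ => ?_
  rw [Ncount]
  congr 1
  rw [Finset.filter_filter]
  apply Finset.filter_congr
  intro x _
  simp [and_comm]

lemma cyl_card (n m : ℕ) (hmn : m ≤ n) (a₁ a₂ : Fin m → ZMod p) :
    (Finset.univ.filter fun x : Fin n → ZMod p =>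
        (fun i : Fin m => x (Fin.castLE hmn i)) = a₁).card =
    (Finset.univ.filter fun x : Fin n → ZMod p =>
        (fun i : Fin m => x (Fin.castLE hmn i)) = a₂).card := by
  classical
  set v : Fin n → ZMod p := fun j => if h : (j : ℕ) < m then (a₂ - a₁) ⟨j, h⟩ else 0 with hv
  have hvc : ∀ i : Fin m, v (Fin.castLE hmn i) = a₂ i - a₁ i := by
    intro i
    simp only [hv]
    have hlt : (↑(Fin.castLE hmn i) : ℕ) < m := i.isLt
    rw [dif_pos hlt]
    have he : (⟨(↑(Fin.castLE hmn i) : ℕ), hlt⟩ : Fin m) = i := Fin.ext rfl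
    rw [he, Pi.sub_apply]
  refine Finset.card_nbij' (fun x => x + v) (fun x => x - v) ?_ ?_ ?_ ?_
  · intro x hx
    rw [Finset.mem_coe, Finset.mem_filter] at hx ⊢
    refine ⟨Finset.mem_univ _, ?_⟩
    funext i
    have := congrFun hx.2 i
    simp only [Pi.add_apply, hvc i]
    rw [this]
    ring
  · intro x hx
    rw [Finset.mem_coe, Finset.mem_filter] at hx ⊢
    refine ⟨Finset.mem_univ _, ?_⟩
    funext i
    have := congrFun hx.2 i
    simp only [Pi.sub_apply, hvc i]
    rw [this]
    ring
  · intro x _; simp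
  · intro x _; simp

lemma card_filter_eq_Ncount (n m : ℕ) (hmn : m ≤ n) (f : (Fin n → ZMod p) → ZMod p)
    (t : ZMod p) (a : Fin m → ZMod p) :
    (Finset.univ.filter fun x : Fin n → ZMod p =>
      f x = t ∧ ∀ i : Fin m, x (Fin.castLE hmn i) = a i).card = Ncount p n m hmn f t a := by
  classical
  rw [Ncount]
  congr 1
  apply Finset.filter_congr
  intro x _
  simp [funext_iff]

lemma filter_markov_split (n m' : ℕ) (hmn : m' + 1 ≤ n) (f : (Fin n → ZMod p) → ZMod p)
    (t : ZMod p) (a : Fin (m' + 1) → ZMod p) :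
    (Finset.univ.filter fun x : Fin n → ZMod p =>
      f x = t ∧ ∀ i : Fin (m' + 1), (i : ℕ) < m' → x (Fin.castLE hmn i) = a i).card
    = ∑ b : ZMod p, Ncount p n (m' + 1) hmn f t
        (Fin.snoc (fun j : Fin m' => a (Fin.castSucc j)) b) := by
  classical
  rw [Finset.card_eq_sum_card_fiberwise
    (f := fun x : Fin n → ZMod p => x (Fin.castLE hmn (Fin.last m')))
    (t := Finset.univ) (fun _ _ => Finset.mem_univ _)]
  refine Finset.sum_congr rfl fun b _ => ?_
  rw [Ncount]
  congr 1
  ext x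
  simp only [Finset.mem_filter, Finset.mem_univ, true_and]
  constructor
  · rintro ⟨⟨hf, hlt⟩, hb⟩
    refine ⟨hf, ?_⟩
    funext i
    refine Fin.lastCases ?_ ?_ i
    · rw [Fin.snoc_last]; exact hb
    · intro j
      rw [Fin.snoc_castSucc]
      exact hlt _ (by simpa using j.isLt)
  · rintro ⟨hf, hπ⟩
    have hfun : ∀ i : Fin (m' + 1), x (Fin.castLE hmn i)
        = Fin.snoc (α := fun _ => ZMod p) (fun j : Fin m' => a (Fin.castSucc j)) b i :=
      fun i => congrFun hπ i
    refine ⟨⟨hf, ?_⟩, ?_⟩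
    · intro i hi
      rw [hfun i, snoc_lt_apply _ _ _ hi]
      have he2 : Fin.castSucc ⟨(i : ℕ), hi⟩ = i := Fin.ext rfl
      rw [he2]
    · rw [hfun (Fin.last m'), Fin.snoc_last]

end Aux4

/-- `Φ_{p^m}(z) ∣ F(z)` iff for every `t` and all `a₁,…,a_m ∈ 𝔽ₚ`,
`p ⬝ #{x : f x = t ∧ xᵢ = aᵢ for 1 ≤ i ≤ m} = #{x : f x = t ∧ xᵢ = aᵢ for 1 ≤ i ≤ m-1}`,
i.e. the conditional distribution of `f(X)` given `X₁,…,X_m` equals that given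
`X₁,…,X_{m-1}`. -/
theorem cyclotomic_dvd_assocPoly_iff_markov
    (p n m : ℕ) [Fact p.Prime] (hn : 0 < n) (hm : 1 ≤ m) (hmn : m ≤ n)
    (f : (Fin n → ZMod p) → ZMod p) :
    Polynomial.cyclotomic (p ^ m) ℂ ∣ assocPoly f ↔
      ∀ t : ZMod p, ∀ a : Fin m → ZMod p,
        p * (Finset.univ.filter fun x : Fin n → ZMod p =>
              f x = t ∧ ∀ i : Fin m, x (Fin.castLE hmn i) = a i).card
          = (Finset.univ.filter fun x : Fin n → ZMod p =>
              f x = t ∧ ∀ i : Fin m, (i : ℕ) < m - 1 → x (Fin.castLE hmn i) = a i).card := by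
  classical
  obtain ⟨m', rfl⟩ : ∃ m', m = m' + 1 := ⟨m - 1, by omega⟩
  have hp : Fact p.Prime := inferInstance
  have hstep : Polynomial.cyclotomic (p ^ (m' + 1)) ℂ ∣ assocPoly f ↔
      ∀ (a' : Fin m' → ZMod p) (b : ZMod p),
        gsum p n (m' + 1) hmn f (Fin.snoc a' b) = gsum p n (m' + 1) hmn f (Fin.snoc a' 0) :=
    (dvd_F_iff_dvd_G hmn f).trans (dvd_G_iff _)
  rw [hstep]
  have hC2_iff : (∀ (a' : Fin m' → ZMod p) (b : ZMod p),
      gsum p n (m' + 1) hmn f (Fin.snoc a' b) = gsum p n (m' + 1) hmn f (Fin.snoc a' 0)) ↔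
      (∀ (t : ZMod p) (a' : Fin m' → ZMod p) (b : ZMod p),
        Ncount p n (m' + 1) hmn f t (Fin.snoc a' b)
          = Ncount p n (m' + 1) hmn f t (Fin.snoc a' 0)) := by
    constructor
    · intro hC1 t a' b
      set c : ZMod p → ℤ := fun s => (Ncount p n (m' + 1) hmn f s (Fin.snoc a' b) : ℤ)
        - (Ncount p n (m' + 1) hmn f s (Fin.snoc a' 0) : ℤ) with hc
      have h0 : ∑ s : ZMod p, (c s : ℂ) * omegaC p ^ s.val = 0 := by
        simp only [hc]
        push_cast
        simp only [sub_mul]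
        rw [Finset.sum_sub_distrib, ← gsum_eq, ← gsum_eq, hC1 a' b, sub_self]
      have h1 : ∑ s : ZMod p, c s = 0 := by
        simp only [hc]
        rw [Finset.sum_sub_distrib, ← Nat.cast_sum, ← Nat.cast_sum]
        rw [Ncount_sum, Ncount_sum, cyl_card n (m' + 1) hmn (Fin.snoc a' b) (Fin.snoc a' 0),
          sub_self]
      have := lin_indep c h0 h1 t
      simp only [hc] at this
      omega
    · intro hC2 a' b
      rw [gsum_eq, gsum_eq]
      exact Finset.sum_congr rfl fun t _ => by rw [hC2 t a' b]
  rw [hC2_iff]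
  constructor
  · intro hC2 t a
    simp only [Nat.add_sub_cancel]
    rw [card_filter_eq_Ncount, filter_markov_split]
    have ha : Fin.snoc (fun j : Fin m' => a (Fin.castSucc j)) (a (Fin.last m')) = a :=
      Fin.snoc_init_self a
    have key : ∀ b : ZMod p, Ncount p n (m' + 1) hmn f t
        (Fin.snoc (fun j : Fin m' => a (Fin.castSucc j)) b) = Ncount p n (m' + 1) hmn f t a := by
      intro b
      rw [hC2 t _ b, ← hC2 t _ (a (Fin.last m')), ha]
    rw [Finset.sum_congr rfl (fun b _ => key b), Finset.sum_const, Finset.card_univ, ZMod.card,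
      smul_eq_mul]
  · intro hR t a' b
    have h1 := hR t (Fin.snoc a' b)
    have h2 := hR t (Fin.snoc a' 0)
    simp only [Nat.add_sub_cancel] at h1 h2
    rw [card_filter_eq_Ncount, filter_markov_split] at h1 h2
    have hcomp : ∀ bb : ZMod p,
        (fun j : Fin m' => Fin.snoc (α := fun _ => ZMod p) a' bb (Fin.castSucc j)) = a' :=
      fun bb => funext fun j => Fin.snoc_castSucc _ _ _
    rw [hcomp] at h1 h2
    exact Nat.eq_of_mul_eq_mul_left hp.out.pos (h1.trans h2.symm)
end

section
/- Let p be a prime, n a positive integer, and 1 ≤ m ≤ n. For a function f : 𝔽_p^n → 𝔽_p, the cyclotomic polynomial Φ_{p^m}(z) divides the associated polynomial F(z) in ℂ[z] if and only if for all a_1,...,a_{m−1} ∈ 𝔽_p and every j ∈ {0,1,...,p−2}, Σ_{x : x_i = a_i (1≤i≤m−1), x_m = j} ω^{f(x)} = Σ_{x : x_i = a_i (1≤i≤m−1), x_m = p−1} ω^{f(x)}, where each sum ranges over the remaining variables x_{m+1},...,x_n ∈ 𝔽_p. -/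
open Polynomial Finset

namespace CycAux

variable {p n k : ℕ} [hp : Fact p.Prime]

/-- Restriction of `x` to its first `k+1` coordinates, as a `Fin p`-valued tuple. -/
def rho (hmn : k + 1 ≤ n) (x : Fin n → ZMod p) : Fin (k + 1) → Fin p :=
  fun i => ⟨(x (Fin.castLE hmn i)).val, ZMod.val_lt _⟩

/-- base-`p` value of a tuple of digits. -/
def eIdx {r : ℕ} (a : Fin r → Fin p) : ℕ := (finFunctionFinEquiv a : ℕ)

lemma eIdx_apply {r : ℕ} (a : Fin r → Fin p) :
    eIdx a = ∑ i : Fin r, (a i : ℕ) * p ^ (i : ℕ) := finFunctionFinEquiv_apply a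

lemma eIdx_lt {r : ℕ} (a : Fin r → Fin p) : eIdx a < p ^ r := (finFunctionFinEquiv a).isLt

lemma eIdx_inj {r : ℕ} {a b : Fin r → Fin p} (h : eIdx a = eIdx b) : a = b :=
  finFunctionFinEquiv.injective (Fin.val_injective h)

lemma eIdx_snoc (a : Fin k → Fin p) (j : Fin p) :
    eIdx (Fin.snoc a j) = eIdx a + (j : ℕ) * p ^ k := by
  rw [eIdx_apply, eIdx_apply, Fin.sum_univ_castSucc]
  simp

lemma idx_eq (hmn : k + 1 ≤ n) (x : Fin n → ZMod p) :
    ∃ t, idx x = eIdx (rho hmn x) + p ^ (k + 1) * t := by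
  classical
  set w : ℕ → ℕ := fun i => if h : i < n then (x ⟨i, h⟩).val * p ^ i else 0 with hw
  have h1 : idx x = ∑ i ∈ Finset.range n, w i := by
    rw [idx, ← Fin.sum_univ_eq_sum_range w n]
    refine Finset.sum_congr rfl fun i _ => ?_
    simp [hw, i.isLt]
  have h2 : eIdx (rho hmn x) = ∑ i ∈ Finset.range (k + 1), w i := by
    rw [eIdx_apply, ← Fin.sum_univ_eq_sum_range w (k + 1)]
    refine Finset.sum_congr rfl fun i _ => ?_
    have hi : (i : ℕ) < n := lt_of_lt_of_le i.isLt hmn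
    simp only [hw, dif_pos hi]
    rfl
  have hsplit : ∑ i ∈ Finset.range n, w i
      = ∑ i ∈ Finset.range (k + 1), w i + ∑ i ∈ Finset.Ico (k + 1) n, w i := by
    rw [Finset.range_eq_Ico, Finset.range_eq_Ico, Finset.sum_Ico_consecutive _ (Nat.zero_le _) hmn]
  have hdvd : p ^ (k + 1) ∣ ∑ i ∈ Finset.Ico (k + 1) n, w i := by
    refine Finset.dvd_sum fun i hi => ?_
    rw [Finset.mem_Ico] at hi
    simp only [hw, dif_pos hi.2]
    exact Dvd.dvd.mul_left (pow_dvd_pow p hi.1) _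
  obtain ⟨t, ht⟩ := hdvd
  exact ⟨t, by rw [h1, hsplit, ← h2, ht]⟩

/-- slice sum. -/
noncomputable def sliceS (hmn : k + 1 ≤ n) (f : (Fin n → ZMod p) → ZMod p)
    (a : Fin (k + 1) → Fin p) : ℂ :=
  ∑ x ∈ Finset.univ.filter (fun x : Fin n → ZMod p => rho hmn x = a), omegaC p ^ (f x).val

/-- the reduced polynomial. -/
noncomputable def Gpoly (hmn : k + 1 ≤ n) (f : (Fin n → ZMod p) → ZMod p) : Polynomial ℂ :=
  ∑ a : Fin (k + 1) → Fin p, Polynomial.monomial (eIdx a) (sliceS hmn f a)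

lemma Gpoly_eq (hmn : k + 1 ≤ n) (f : (Fin n → ZMod p) → ZMod p) :
    Gpoly hmn f
      = ∑ x : Fin n → ZMod p, Polynomial.monomial (eIdx (rho hmn x)) (omegaC p ^ (f x).val) := by
  classical
  rw [Gpoly, ← Finset.sum_fiberwise Finset.univ (rho hmn)
    (fun x : Fin n → ZMod p => Polynomial.monomial (eIdx (rho hmn x)) (omegaC p ^ (f x).val))]
  refine Finset.sum_congr rfl fun a _ => ?_
  rw [sliceS, map_sum]
  refine Finset.sum_congr rfl fun x hx => ?_
  rw [Finset.mem_filter] at hx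
  rw [hx.2]

lemma coeff_Gpoly (hmn : k + 1 ≤ n) (f : (Fin n → ZMod p) → ZMod p)
    (a : Fin (k + 1) → Fin p) :
    (Gpoly hmn f).coeff (eIdx a) = sliceS hmn f a := by
  classical
  rw [Gpoly, Polynomial.finset_sum_coeff, Finset.sum_eq_single a]
  · simp [Polynomial.coeff_monomial]
  · intro b _ hb
    rw [Polynomial.coeff_monomial, if_neg fun h => hb (eIdx_inj h)]
  · simp

lemma coeff_Gpoly_zero (hmn : k + 1 ≤ n) (f : (Fin n → ZMod p) → ZMod p)
    {N : ℕ} (hN : p ^ (k + 1) ≤ N) : (Gpoly hmn f).coeff N = 0 := by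
  classical
  rw [Gpoly, Polynomial.finset_sum_coeff]
  refine Finset.sum_eq_zero fun a _ => ?_
  rw [Polynomial.coeff_monomial, if_neg]
  have := eIdx_lt a
  omega

lemma natDegree_Gpoly (hmn : k + 1 ≤ n) (f : (Fin n → ZMod p) → ZMod p) :
    (Gpoly hmn f).natDegree ≤ p ^ (k + 1) - 1 := by
  have hpos : 0 < p ^ (k + 1) := pow_pos hp.out.pos _
  refine Polynomial.natDegree_le_iff_coeff_eq_zero.mpr fun N hN => ?_
  exact coeff_Gpoly_zero hmn f (by omega)

lemma dvd_iff_G (hmn : k + 1 ≤ n) (f : (Fin n → ZMod p) → ZMod p) :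
    Polynomial.cyclotomic (p ^ (k + 1)) ℂ ∣ assocPoly f
      ↔ Polynomial.cyclotomic (p ^ (k + 1)) ℂ ∣ Gpoly hmn f := by
  have key : Polynomial.cyclotomic (p ^ (k + 1)) ℂ ∣ assocPoly f - Gpoly hmn f := by
    rw [assocPoly, Gpoly_eq hmn f, ← Finset.sum_sub_distrib]
    refine Finset.dvd_sum fun x _ => ?_
    obtain ⟨t, ht⟩ := idx_eq hmn x
    rw [ht]
    set c : ℂ := omegaC p ^ (f x).val
    set b : ℕ := eIdx (rho hmn x)
    have hmono : Polynomial.monomial (b + p ^ (k + 1) * t) c - Polynomial.monomial b c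
        = Polynomial.C c * Polynomial.X ^ b * ((Polynomial.X ^ p ^ (k + 1)) ^ t - 1) := by
      rw [mul_sub, mul_one, ← pow_mul, mul_assoc, ← pow_add,
        Polynomial.C_mul_X_pow_eq_monomial, Polynomial.C_mul_X_pow_eq_monomial]
    rw [hmono]
    refine Dvd.dvd.mul_left ?_ _
    calc Polynomial.cyclotomic (p ^ (k + 1)) ℂ
        ∣ Polynomial.X ^ p ^ (k + 1) - 1 := Polynomial.cyclotomic.dvd_X_pow_sub_one _ _
      _ ∣ (Polynomial.X ^ p ^ (k + 1)) ^ t - 1 := by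
          simpa using sub_dvd_pow_sub_pow ((Polynomial.X : Polynomial ℂ) ^ p ^ (k + 1)) 1 t
  constructor
  · intro h
    have := dvd_sub h key
    simpa using this
  · intro h
    have := dvd_add h key
    simpa using this

lemma dvd_G_iff (hmn : k + 1 ≤ n) (f : (Fin n → ZMod p) → ZMod p) :
    Polynomial.cyclotomic (p ^ (k + 1)) ℂ ∣ Gpoly hmn f ↔
      ∀ a : Fin k → Fin p, ∀ j j' : Fin p,
        sliceS hmn f (Fin.snoc a j) = sliceS hmn f (Fin.snoc a j') := by
  have hq : 0 < p ^ k := pow_pos hp.out.pos _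
  constructor
  · rintro ⟨R, hR⟩ a j j'
    suffices key : ∀ j : Fin p, sliceS hmn f (Fin.snoc a j) = R.coeff (eIdx a) by
      rw [key j, key j']
    intro j
    by_cases hR0 : R = 0
    · rw [← coeff_Gpoly hmn f, hR, hR0, mul_zero, Polynomial.coeff_zero,
        Polynomial.coeff_zero]
    · have hdegR : R.natDegree < p ^ k := by
        have h1 : (Gpoly hmn f).natDegree
            = (Polynomial.cyclotomic (p ^ (k + 1)) ℂ).natDegree + R.natDegree := by
          rw [hR]; exact Polynomial.natDegree_mul (Polynomial.cyclotomic_ne_zero _ ℂ) hR0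
        have h2 := natDegree_Gpoly hmn f
        have h3 : (Polynomial.cyclotomic (p ^ (k + 1)) ℂ).natDegree = p ^ k * (p - 1) := by
          rw [Polynomial.natDegree_cyclotomic, Nat.totient_prime_pow hp.out (Nat.succ_pos k)]
          simp
        have hp2 : 2 ≤ p := hp.out.two_le
        have hpow : p ^ (k + 1) = p ^ k * p := by rw [pow_succ]
        rw [h1, h3] at h2
        rw [hpow] at h2
        have hid : p ^ k * (p - 1) + p ^ k = p ^ k * p := by
          have hq1 : p - 1 + 1 = p := by omega
          calc p ^ k * (p - 1) + p ^ k = p ^ k * (p - 1 + 1) := by ring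
            _ = p ^ k * p := by rw [hq1]
        omega
      have hcoeff : ∀ N, p ^ k ≤ N → R.coeff N = 0 := fun N hN =>
        Polynomial.coeff_eq_zero_of_natDegree_lt (lt_of_lt_of_le hdegR hN)
      rw [← coeff_Gpoly hmn f, hR, Polynomial.cyclotomic_prime_pow_eq_geom_sum hp.out,
        Finset.sum_mul, Polynomial.finset_sum_coeff, eIdx_snoc]
      have hea := eIdx_lt a
      rw [Finset.sum_eq_single (j : ℕ)]
      · rw [← pow_mul, mul_comm ((Polynomial.X : Polynomial ℂ) ^ (p ^ k * (j : ℕ))) R,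
          Polynomial.coeff_mul_X_pow', if_pos (by rw [mul_comm]; omega)]
        congr 1
        rw [mul_comm]
        omega
      · intro i hi hij
        rw [← pow_mul, mul_comm ((Polynomial.X : Polynomial ℂ) ^ (p ^ k * i)) R,
          Polynomial.coeff_mul_X_pow']
        rcases lt_or_gt_of_ne hij with h | h
        · rw [if_pos]
          · apply hcoeff
            have : p ^ k * i + p ^ k ≤ p ^ k * (j : ℕ) := by
              have := Nat.mul_le_mul_left (p ^ k) (show i + 1 ≤ (j : ℕ) by omega)
              rw [mul_add, mul_one] at this
              exact this
            rw [mul_comm (j : ℕ) (p ^ k)]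
            omega
          · have : p ^ k * i ≤ p ^ k * (j : ℕ) := Nat.mul_le_mul_left _ (le_of_lt h)
            rw [mul_comm (j : ℕ) (p ^ k)]
            omega
        · rw [if_neg]
          have : p ^ k * ((j : ℕ) + 1) ≤ p ^ k * i := Nat.mul_le_mul_left _ (by omega)
          rw [mul_add, mul_one] at this
          rw [mul_comm (j : ℕ) (p ^ k)]
          omega
      · intro hj
        exact absurd (Finset.mem_range.mpr j.isLt) hj
  · intro h
    have hswap : ∀ (a : Fin k → Fin p) (j : Fin p),
        sliceS hmn f (Fin.snoc a j) = sliceS hmn f (Fin.snoc a 0) := fun a j => h a j 0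
    refine ⟨∑ a : Fin k → Fin p, Polynomial.monomial (eIdx a) (sliceS hmn f (Fin.snoc a 0)), ?_⟩
    rw [Polynomial.cyclotomic_prime_pow_eq_geom_sum hp.out, Gpoly, Finset.sum_mul]
    have hsnoc : ∀ z : Fin p × (Fin k → Fin p),
        (Fin.snocEquiv (fun _ => Fin p)) z = Fin.snoc z.2 z.1 :=
      fun z => funext fun i => by simp [Fin.snocEquiv]
    calc (∑ a : Fin (k + 1) → Fin p, Polynomial.monomial (eIdx a) (sliceS hmn f a))
        = ∑ z : Fin p × (Fin k → Fin p),
            Polynomial.monomial (eIdx (Fin.snoc z.2 z.1)) (sliceS hmn f (Fin.snoc z.2 z.1)) := by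
          rw [← Equiv.sum_comp (Fin.snocEquiv (fun _ => Fin p))
            (fun a : Fin (k + 1) → Fin p => Polynomial.monomial (eIdx a) (sliceS hmn f a))]
          exact Finset.sum_congr rfl fun z _ => by rw [hsnoc]
      _ = ∑ j : Fin p, ∑ a : Fin k → Fin p,
            Polynomial.monomial (eIdx a + (j : ℕ) * p ^ k) (sliceS hmn f (Fin.snoc a 0)) := by
          rw [Fintype.sum_prod_type]
          exact Finset.sum_congr rfl fun j _ => Finset.sum_congr rfl fun a _ => by
            rw [eIdx_snoc, hswap]
      _ = ∑ i ∈ Finset.range p, ∑ a : Fin k → Fin p,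
            Polynomial.monomial (eIdx a + i * p ^ k) (sliceS hmn f (Fin.snoc a 0)) := by
          rw [Finset.sum_range (fun i => ∑ a : Fin k → Fin p,
            Polynomial.monomial (eIdx a + i * p ^ k) (sliceS hmn f (Fin.snoc a 0)))]
      _ = ∑ i ∈ Finset.range p, ((Polynomial.X : Polynomial ℂ) ^ p ^ k) ^ i *
            ∑ a : Fin k → Fin p, Polynomial.monomial (eIdx a) (sliceS hmn f (Fin.snoc a 0)) := by
          refine Finset.sum_congr rfl fun i _ => ?_
          rw [Finset.mul_sum]
          refine Finset.sum_congr rfl fun a _ => ?_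
          rw [← Polynomial.C_mul_X_pow_eq_monomial, ← Polynomial.C_mul_X_pow_eq_monomial,
            ← pow_mul]
          ring

end CycAux

/-- `Φ_{p^m}(z) ∣ F(z)` iff for all fixed values `a₁,…,a_{m-1}` and every
`j ∈ {0,…,p-2}`, the sum of `ω^{f(x)}` over `x` with `xᵢ = aᵢ (1 ≤ i ≤ m-1)` and
`x_m = j` equals the corresponding sum with `x_m = p-1`. -/
theorem cyclotomic_dvd_assocPoly_iff_slice_sums_eq
    (p n m : ℕ) [Fact p.Prime] (hn : 0 < n) (hm : 1 ≤ m) (hmn : m ≤ n)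
    (f : (Fin n → ZMod p) → ZMod p) :
    Polynomial.cyclotomic (p ^ m) ℂ ∣ assocPoly f ↔
      ∀ a : Fin n → ZMod p, ∀ j : ℕ, j < p - 1 →
        ∑ x ∈ (Finset.univ.filter fun x : Fin n → ZMod p =>
            (∀ i : Fin n, (i : ℕ) < m - 1 → x i = a i) ∧
              x ⟨m - 1, by omega⟩ = (j : ZMod p)), omegaC p ^ (f x).val
          = ∑ x ∈ (Finset.univ.filter fun x : Fin n → ZMod p =>
              (∀ i : Fin n, (i : ℕ) < m - 1 → x i = a i) ∧
                x ⟨m - 1, by omega⟩ = ((p - 1 : ℕ) : ZMod p)), omegaC p ^ (f x).val := by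
  obtain ⟨k, rfl⟩ : ∃ k, m = k + 1 := ⟨m - 1, by omega⟩
  have hkn : k < n := by omega
  have hk1n : k + 1 ≤ n := hmn
  have hp2 : 2 ≤ p := (Fact.out : p.Prime).two_le
  have hkn' : k ≤ n := by omega
  rw [CycAux.dvd_iff_G hk1n f, CycAux.dvd_G_iff hk1n f]
  have filter_eq : ∀ (a : Fin n → ZMod p) (c : ℕ) (hc : c < p),
      (Finset.univ.filter fun x : Fin n → ZMod p =>
          (∀ i : Fin n, (i : ℕ) < k + 1 - 1 → x i = a i) ∧
            x ⟨k + 1 - 1, by omega⟩ = (c : ZMod p))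
      = Finset.univ.filter fun x : Fin n → ZMod p =>
          CycAux.rho hk1n x = Fin.snoc
            (fun i : Fin k =>
              (⟨(a (Fin.castLE hkn' i)).val, ZMod.val_lt _⟩ : Fin p))
            (⟨c, hc⟩ : Fin p) := by
    intro a c hc
    ext x
    simp only [Finset.mem_filter, Finset.mem_univ, true_and]
    rw [funext_iff]
    constructor
    · rintro ⟨h1, h2⟩ i
      refine Fin.lastCases ?_ ?_ i
      · apply Fin.ext
        rw [Fin.snoc_last]
        show (x (Fin.castLE hk1n (Fin.last k))).val = c
        have e1 : Fin.castLE hk1n (Fin.last k) = (⟨k + 1 - 1, by omega⟩ : Fin n) := by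
          apply Fin.ext; simp
        rw [e1, h2, ZMod.val_cast_of_lt hc]
      · intro i'
        apply Fin.ext
        rw [Fin.snoc_castSucc]
        show (x (Fin.castLE hk1n i'.castSucc)).val = (a (Fin.castLE hkn' i')).val
        have e1 : Fin.castLE hk1n i'.castSucc = Fin.castLE hkn' i' := by
          apply Fin.ext; simp
        rw [e1, h1 _ (by simpa using i'.isLt)]
    · intro h
      constructor
      · intro i hi
        have hik : (i : ℕ) < k := by omega
        have hcs := congrArg Fin.val (h ((⟨(i : ℕ), hik⟩ : Fin k)).castSucc)
        rw [Fin.snoc_castSucc] at hcs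
        have e1 : Fin.castLE hk1n ((⟨(i : ℕ), hik⟩ : Fin k)).castSucc = i := Fin.ext rfl
        have e2 : Fin.castLE hkn' (⟨(i : ℕ), hik⟩ : Fin k) = i := Fin.ext rfl
        apply ZMod.val_injective p
        have hcs' : (x (Fin.castLE hk1n ((⟨(i : ℕ), hik⟩ : Fin k)).castSucc)).val
            = (a (Fin.castLE hkn' (⟨(i : ℕ), hik⟩ : Fin k))).val := hcs
        rwa [e1, e2] at hcs'
      · have hls := congrArg Fin.val (h (Fin.last k))
        rw [Fin.snoc_last] at hls
        apply ZMod.val_injective p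
        rw [ZMod.val_cast_of_lt hc]
        have e1 : Fin.castLE hk1n (Fin.last k) = (⟨k + 1 - 1, by omega⟩ : Fin n) :=
          Fin.ext (by simp)
        have hls' : (x (Fin.castLE hk1n (Fin.last k))).val = c := hls
        rwa [e1] at hls'
  constructor
  · intro h a j hj
    rw [filter_eq a j (by omega), filter_eq a (p - 1) (by omega)]
    exact h _ _ _
  · intro h a₀ j j'
    suffices key : ∀ j : Fin p,
        CycAux.sliceS hk1n f (Fin.snoc a₀ j)
          = CycAux.sliceS hk1n f (Fin.snoc a₀ (⟨p - 1, by omega⟩ : Fin p)) by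
      rw [key j, key j']
    intro j
    by_cases hj : (j : ℕ) = p - 1
    · have : j = (⟨p - 1, by omega⟩ : Fin p) := Fin.ext hj
      rw [this]
    · have hj' : (j : ℕ) < p - 1 := by have := j.isLt; omega
      classical
      set A : Fin n → ZMod p :=
        fun i => if h : (i : ℕ) < k then (((a₀ ⟨(i : ℕ), h⟩ : Fin p) : ℕ) : ZMod p) else 0
        with hA
      have hA0 : (fun i : Fin k =>
          (⟨(A (Fin.castLE hkn' i)).val, ZMod.val_lt _⟩ : Fin p)) = a₀ := by
        funext i
        apply Fin.ext
        show (A (Fin.castLE hkn' i)).val = (a₀ i : ℕ)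
        have hv : ((Fin.castLE hkn' i : Fin n) : ℕ) = (i : ℕ) := rfl
        rw [hA]
        simp only [hv, i.isLt, dif_pos]
        rw [ZMod.val_cast_of_lt (a₀ _).isLt]
      have h1 := h A (j : ℕ) hj'
      rw [filter_eq A (j : ℕ) (by omega), filter_eq A (p - 1) (by omega), hA0] at h1
      have e1 : (⟨(j : ℕ), by omega⟩ : Fin p) = j := Fin.ext rfl
      rw [e1] at h1
      exact h1
end
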